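/- arXiv:2106.04860 — 6 statements merged into one kernel-verified Lean document; each statement's English description precedes it below -/
import Mathlib

section
/- Let J = {b₁, …, b_k} ⊂ [0,∞) be a finite set and κ₁, …, κ_k > 0, and define the discontinuous drift μ̃(x) := μ(x) − Σ_{j : x ≥ b_j} κ_j. (i) Let ψ̃ : [0,∞) → ℝ be continuously differentiable, twice continuously differentiable on [0,∞)∖J, with ψ̃(0) = 0, ψ̃'(0) = 1, ψ̃(x) > 0 for x > 0, ψ̃ nondecreasing, and ½σ(x)²ψ̃''(x) + μ̃(x)ψ̃'(x) − r·ψ̃(x) = 0 for all x ∈ [0,∞)∖J. Then there exists a unique b** ∈ [0,∞) such that ψ̃''(x) < 0 for all x ∈ [0,b**)∖J and ψ̃''(x) > 0 for all x ∈ (b**,∞)∖J; moreover b** > 0 if μ(0) − Σ_{j : b_j = 0} κ_j > 0, and otherwise b** = 0 and ψ̃ is convex. (ii) Let K > 0 and let φ̃ : [0,∞) → ℝ be continuously differentiable, twice continuously differentiable on [0,∞)∖J, positive, nonincreasing, with φ̃(x) → 0 as x → ∞, and ½σ(x)²φ̃''(x) + (μ̃(x) − K)φ̃'(x) − r·φ̃(x)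 = 0 for all x ∈ [0,∞)∖J. Then φ̃'(x) < 0 for all x ≥ 0, φ̃''(x) > 0 for all x ∈ [0,∞)∖J, and φ̃ is convex on [0,∞). -/
/-!
Off the jump set `J` the ODE says `½ σ² u'' = F` with `F = r u - μ̃ u'`, and `F` is defined and
right-continuous everywhere. If `u' ≥ 0`, and `u' > 0` wherever `F ≥ 0`, then `F` stays positive
once it is nonnegative: between jumps `F' = (r - μ') u' - (2 μ̃ / σ²) F`, so `exp (∫ 2 μ̃ / σ²) * F`
is nondecreasing, and at a jump `b_j` the function `F` increases by `κ_j u'(b_j) ≥ 0`.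

For `ψ̃`, some `x ≥ 0` has `F(x) ≥ 0` (otherwise `ψ̃` would be concave, and `μ(c) ≤ r c - 1/c`
would force `F(c) > 0`); the infimum of such `x` is `b**`, and the sign of
`F(0) = -(μ(0) - Σ_{b_j = 0} κ_j)` decides whether `b** > 0`. For `φ̃`, the term `F` of `-φ̃` is
minus that of `φ̃`, and `-φ̃` is nondecreasing: if `F_φ̃ ≤ 0` at some point, then `F_φ̃ < 0` beyond
it, so `φ̃` is concave with negative slope there and cannot stay positive. Hence `F_φ̃ > 0`, i.e.
`φ̃'' > 0` off `J`.
-/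

open Set Filter Topology

theorem strictMonoOn_Icc_of_deriv_pos_of_finite {f : ℝ → ℝ} {s : Set ℝ} (hs : s.Finite)
    {a b : ℝ} (hf : ContinuousOn f (Icc a b)) (hf' : ∀ x ∈ Ioo a b \ s, 0 < deriv f x) :
    StrictMonoOn f (Icc a b) := by
  induction s, hs using Set.Finite.induction_on generalizing a b with
  | empty => exact strictMonoOn_of_deriv_pos (convex_Icc a b) hf (by simpa using hf')
  | @insert e s _ _ ih =>
    by_cases he : e ∈ Ioo a b
    · rw [← Icc_union_Icc_eq_Icc he.1.le he.2.le]
      refine StrictMonoOn.union (ih (hf.mono (Icc_subset_Icc_right he.2.le)) fun x hx => ?_)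
        (ih (hf.mono (Icc_subset_Icc_left he.1.le)) fun x hx => ?_)
        (isGreatest_Icc he.1.le) (isLeast_Icc he.2.le)
      · exact hf' x ⟨⟨hx.1.1, hx.1.2.trans he.2⟩,
          by rintro (rfl | h); exacts [hx.1.2.ne rfl, hx.2 h]⟩
      · exact hf' x ⟨⟨he.1.trans hx.1.1, hx.1.2⟩,
          by rintro (rfl | h); exacts [hx.1.1.ne rfl, hx.2 h]⟩
    · exact ih hf fun x hx => hf' x ⟨hx.1, by rintro (rfl | h); exacts [he hx.1, hx.2 h]⟩

theorem strictMonoOn_of_deriv_pos_of_finite {D : Set ℝ} (hD : Convex ℝ D) {f : ℝ → ℝ}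
    {s : Set ℝ} (hs : s.Finite) (hf : ContinuousOn f D)
    (hf' : ∀ x ∈ interior D \ s, 0 < deriv f x) : StrictMonoOn f D := by
  intro x hx y hy hxy
  have hsub : Icc x y ⊆ D := hD.ordConnected.out hx hy
  have hint : Ioo x y ⊆ interior D := by
    simpa only [interior_Icc] using interior_mono hsub
  exact strictMonoOn_Icc_of_deriv_pos_of_finite hs (hf.mono hsub)
    (fun z hz => hf' z ⟨hint hz.1, hz.2⟩) (left_mem_Icc.2 hxy.le) (right_mem_Icc.2 hxy.le) hxy

theorem strictAntiOn_of_deriv_neg_of_finite {D : Set ℝ} (hD : Convex ℝ D) {f : ℝ → ℝ}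
    {s : Set ℝ} (hs : s.Finite) (hf : ContinuousOn f D)
    (hf' : ∀ x ∈ interior D \ s, deriv f x < 0) : StrictAntiOn f D := by
  have := strictMonoOn_of_deriv_pos_of_finite hD hs hf.neg fun x hx => by
    simpa [deriv.neg] using hf' x hx
  exact fun x hx y hy hxy => neg_lt_neg_iff.1 (this hx hy hxy)

theorem deriv_nonneg_of_monotoneOn_Ici {f : ℝ → ℝ} {a x : ℝ} (hf : MonotoneOn f (Ici a))
    (hd : DifferentiableAt ℝ f x) (hx : a ≤ x) : 0 ≤ deriv f x :=
  hd.derivWithin (uniqueDiffOn_Ici a x hx) ▸ hf.derivWithin_nonneg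

theorem deriv_nonpos_of_antitoneOn_Ici {f : ℝ → ℝ} {a x : ℝ} (hf : AntitoneOn f (Ici a))
    (hd : DifferentiableAt ℝ f x) (hx : a ≤ x) : deriv f x ≤ 0 :=
  hd.derivWithin (uniqueDiffOn_Ici a x hx) ▸ hf.derivWithin_nonpos

theorem ConcaveOn.exists_nonpos_of_deriv_neg {f : ℝ → ℝ} {a : ℝ} (hf : ConcaveOn ℝ (Ici a) f)
    (hd : DifferentiableAt ℝ f a) (h : deriv f a < 0) : ∃ x ≥ a, f x ≤ 0 := by
  rcases le_or_gt (f a) 0 with ha | ha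
  · exact ⟨a, le_rfl, ha⟩
  set X := a - f a / deriv f a
  have haX : a < X := by have := div_neg_of_pos_of_neg ha h; simp only [X]; linarith
  have hslope := hf.slope_le_deriv self_mem_Ici haX.le haX hd
  rw [slope_def_field, div_le_iff₀ (sub_pos.2 haX)] at hslope
  refine ⟨X, haX.le, ?_⟩
  have : deriv f a * (X - a) = -f a := by simp only [X]; field_simp [h.ne]; ring
  linarith

theorem exists_hasDerivAt_primitive {q : ℝ → ℝ} {a z : ℝ} (haz : a ≤ z)
    (hq : ContinuousOn q (Icc a z)) :
    ∃ Q : ℝ → ℝ, ContinuousOn Q (Icc a z) ∧ ∀ x ∈ Ioo a z, HasDerivAt Q (q x) x := by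
  refine ⟨fun x => ∫ t in a..x, q t, ?_, fun x hx => ?_⟩
  · rw [← uIcc_of_le haz] at hq ⊢
    exact intervalIntegral.continuousOn_primitive_interval (hq.integrableOn_compact isCompact_uIcc)
  · refine intervalIntegral.integral_hasDerivAt_right
      (hq.mono ?_).intervalIntegrable
      (hq.mono Ioo_subset_Icc_self |>.stronglyMeasurableAtFilter isOpen_Ioo x hx)
      (hq.continuousAt (Icc_mem_nhds hx.1 hx.2))
    simpa [uIcc_of_le hx.1.le] using Icc_subset_Icc_right hx.2.le

theorem pos_of_hasDerivAt_eq_sub_mul {f e q : ℝ → ℝ} {a z : ℝ}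
    (hf : ContinuousOn f (Icc a z)) (hq : ContinuousOn q (Icc a z))
    (hd : ∀ x ∈ Ioo a z, HasDerivAt f (e x - q x * f x) x)
    (he : ∀ x ∈ Ioo a z, 0 ≤ e x) (hef : ∀ x ∈ Ioo a z, 0 ≤ f x → 0 < e x) (ha : 0 ≤ f a)
    {x : ℝ} (hx : x ∈ Ioc a z) : 0 < f x := by
  have haz : a ≤ z := hx.1.le.trans hx.2
  obtain ⟨Q, hQc, hQd⟩ := exists_hasDerivAt_primitive haz hq
  -- integrating factor: `(exp Q * f)' = exp Q * e`
  set h := fun w => Real.exp (Q w) * f w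
  have hhd : ∀ w ∈ Ioo a z, HasDerivAt h (Real.exp (Q w) * e w) w := fun w hw =>
    ((hQd w hw).exp.mul (hd w hw)).congr_deriv (by ring)
  have hhc : ContinuousOn h (Icc a z) := (hQc.rexp).mul hf
  have hmono : MonotoneOn h (Icc a z) := by
    refine monotoneOn_of_deriv_nonneg (convex_Icc a z) hhc
      (fun w hw => (hhd w (by rwa [interior_Icc] at hw)).differentiableAt.differentiableWithinAt)
      fun w hw => ?_
    rw [interior_Icc] at hw
    rw [(hhd w hw).deriv]
    exact mul_nonneg (Real.exp_pos _).le (he w hw)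
  have hnonneg : ∀ w ∈ Icc a z, 0 ≤ f w := fun w hw =>
    nonneg_of_mul_nonneg_right ((mul_nonneg (Real.exp_pos _).le ha).trans
      (hmono (left_mem_Icc.2 haz) hw hw.1)) (Real.exp_pos _)
  have hsmono : StrictMonoOn h (Icc a z) := by
    refine strictMonoOn_of_deriv_pos (convex_Icc a z) hhc fun w hw => ?_
    rw [interior_Icc] at hw
    rw [(hhd w hw).deriv]
    exact mul_pos (Real.exp_pos _) (hef w hw (hnonneg w (Ioo_subset_Icc_self hw)))
  exact pos_of_mul_pos_right ((mul_nonneg (Real.exp_pos _).le ha).trans_lt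
    (hsmono (left_mem_Icc.2 haz) (Ioc_subset_Icc_self hx) hx.1)) (Real.exp_pos _).le

theorem exists_sign_threshold {F : ℝ → ℝ} (hprop : ∀ x₀ ≥ 0, 0 ≤ F x₀ → ∀ x > x₀, 0 < F x)
    (hex : ∃ x ≥ 0, 0 ≤ F x) :
    ∃ t ≥ 0, (∀ x, 0 ≤ x → x < t → F x < 0) ∧ ∀ x, t < x → 0 < F x := by
  set A := {x | 0 ≤ x ∧ 0 ≤ F x}
  have hA : A.Nonempty := hex
  have hbdd : BddBelow A := ⟨0, fun _ h => h.1⟩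
  refine ⟨sInf A, le_csInf hA fun _ h => h.1, fun x hx hxt => ?_, fun x hx => ?_⟩
  · by_contra! h
    exact (csInf_le hbdd ⟨hx, h⟩).not_gt hxt
  · obtain ⟨a, ha, hax⟩ := exists_lt_of_csInf_lt hA hx
    exact hprop a ha.1 ha.2 x hax

theorem eq_of_sign_threshold {G : ℝ → ℝ} {s : Set ℝ} (hs : s.Finite) {t t' : ℝ}
    (ht : 0 ≤ t) (ht' : 0 ≤ t')
    (hneg : ∀ x, 0 ≤ x → x < t → x ∉ s → G x < 0) (hpos : ∀ x, t < x → x ∉ s → 0 < G x)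
    (hneg' : ∀ x, 0 ≤ x → x < t' → x ∉ s → G x < 0) (hpos' : ∀ x, t' < x → x ∉ s → 0 < G x) :
    t' = t := by
  wlog h : t < t' generalizing t t'
  · rcases (not_lt.1 h).lt_or_eq with h | h
    · exact (this ht' ht hneg' hpos' hneg hpos h).symm
    · exact h
  obtain ⟨x, hx, hxs⟩ := ((Ioo_infinite h).sdiff hs).nonempty
  exact ((hpos x hx.1 hxs).not_gt (hneg' x (ht.trans hx.1.le) hx.2 hxs)).elim

section JumpDrift

variable {k : ℕ} (b κ : Fin k → ℝ)

/-- The paper's drift is `μ̃ = μ - jumpSum b κ`. -/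
noncomputable def jumpSum (x : ℝ) : ℝ := ∑ j, if b j ≤ x then κ j else 0

theorem jumpSum_mono (hκ : ∀ j, 0 ≤ κ j) : Monotone (jumpSum b κ) := fun x y hxy =>
  Finset.sum_le_sum fun j _ => by
    by_cases hx : b j ≤ x
    · simp [hx, hx.trans hxy]
    · by_cases hy : b j ≤ y <;> simp [hx, hy, hκ j]

theorem jumpSum_eq_of_forall_notMem_Ioc {y w : ℝ} (hyw : y ≤ w) (h : ∀ j, b j ∉ Ioc y w) :
    jumpSum b κ w = jumpSum b κ y :=
  Finset.sum_congr rfl fun j _ => if_congr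
    ⟨fun hw => not_lt.1 fun hy => h j ⟨hy, hw⟩, fun hy => hy.trans hyw⟩ rfl rfl

theorem jumpSum_eventuallyEq_nhdsGE (y : ℝ) :
    jumpSum b κ =ᶠ[𝓝[≥] y] fun _ => jumpSum b κ y := by
  have : ∀ j, ∀ᶠ w in 𝓝[≥] y, b j ∉ Ioc y w := fun j => by
    rcases le_or_gt (b j) y with h | h
    · exact Eventually.of_forall fun w hw => hw.1.not_ge h
    · filter_upwards [nhdsWithin_le_nhds (eventually_lt_nhds h)] with w hw hmem
      exact hmem.2.not_gt hw
  filter_upwards [eventually_all.2 this, self_mem_nhdsWithin] with w hw hyw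
  exact jumpSum_eq_of_forall_notMem_Ioc b κ hyw hw

theorem jumpSum_eventuallyEq_nhdsLT (y : ℝ) :
    jumpSum b κ =ᶠ[𝓝[<] y] fun _ => ∑ j, if b j < y then κ j else 0 := by
  have : ∀ j, ∀ᶠ w in 𝓝[<] y, (b j ≤ w ↔ b j < y) := fun j => by
    rcases lt_or_ge (b j) y with h | h
    · filter_upwards [nhdsWithin_le_nhds (eventually_gt_nhds h)] with w hw
      exact iff_of_true hw.le h
    · filter_upwards [self_mem_nhdsWithin] with w (hw : w < y)
      exact iff_of_false (fun hle => (hle.trans_lt hw).not_ge h) h.not_gt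
  filter_upwards [eventually_all.2 this] with w hw
  exact Finset.sum_congr rfl fun j _ => if_congr (hw j) rfl rfl

theorem jumpSum_zero (hb : ∀ j, 0 ≤ b j) :
    jumpSum b κ 0 = ∑ j, if b j = 0 then κ j else 0 :=
  Finset.sum_congr rfl fun j _ => if_congr (hb j).ge_iff_eq' rfl rfl

theorem eventually_notMem_range_nhdsNE (y : ℝ) : ∀ᶠ w in 𝓝[≠] y, w ∉ range b := by
  filter_upwards [nhdsNE_of_nhdsNE_sdiff_finite univ_mem (Set.finite_range b).to_subtype]
    with w hw using hw.2

end JumpDrift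

/-- With `g` the continuous part of the drift (`μ` for `ψ̃`, `μ - K` for `φ̃`), the ODE makes this
`½ σ² u''` off the jump set; unlike `u''` it is defined everywhere and right-continuous. -/
noncomputable def curvatureTerm {k : ℕ} (r : ℝ) (g : ℝ → ℝ) (b κ : Fin k → ℝ) (u : ℝ → ℝ)
    (x : ℝ) : ℝ :=
  r * u x - (g x - jumpSum b κ x) * deriv u x

structure IsJumpODESolution {k : ℕ} (r : ℝ) (σ g : ℝ → ℝ) (b κ : Fin k → ℝ) (u : ℝ → ℝ) :
    Prop where
  contDiff : ContDiff ℝ 1 u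
  contDiffOn : ContDiffOn ℝ 2 u (Ici 0 \ range b)
  ode : ∀ x, 0 ≤ x → x ∉ range b →
    1 / 2 * σ x ^ 2 * deriv (deriv u) x = curvatureTerm r g b κ u x

section Curvature

variable {k : ℕ} {r : ℝ} {σ g u : ℝ → ℝ} {b κ : Fin k → ℝ}

theorem curvatureTerm_neg (x : ℝ) :
    curvatureTerm r g b κ (-u) x = -curvatureTerm r g b κ u x := by
  simp only [curvatureTerm, deriv.neg', Pi.neg_apply]
  ring

theorem continuousWithinAt_curvatureTerm (hu : ContDiff ℝ 1 u) (hg : Continuous g) (y : ℝ) :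
    ContinuousWithinAt (curvatureTerm r g b κ u) (Ici y) y := by
  have := hu.continuous
  have := hu.continuous_deriv le_rfl
  refine (show Continuous fun w => r * u w - (g w - jumpSum b κ y) * deriv u w by fun_prop)
    |>.continuousWithinAt.congr_of_eventuallyEq ?_ rfl
  filter_upwards [jumpSum_eventuallyEq_nhdsGE b κ y] with w hw
  simp only [curvatureTerm, hw]

namespace IsJumpODESolution

theorem neg (hu : IsJumpODESolution r σ g b κ u) :
    IsJumpODESolution r σ g b κ (-u) where
  contDiff := hu.contDiff.neg
  contDiffOn := hu.contDiffOn.neg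
  ode x hx hxb := by
    have := hu.ode x hx hxb
    rw [curvatureTerm_neg, ← this, deriv.neg', deriv.fun_neg']
    ring

theorem hasDerivAt_deriv (hu : IsJumpODESolution r σ g b κ u) {x : ℝ} (hx : 0 < x)
    (hxb : x ∉ range b) : HasDerivAt (deriv u) (deriv (deriv u) x) x := by
  have hU : IsOpen (Ioi 0 ∩ (range b)ᶜ) :=
    isOpen_Ioi.inter (finite_range b).isClosed.isOpen_compl
  have := (hu.contDiffOn.mono fun w (hw : w ∈ Ioi 0 ∩ _) => ⟨le_of_lt hw.1, hw.2⟩)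
    |>.deriv_of_isOpen hU (by norm_num : (1 : WithTop ℕ∞) + 1 ≤ 2)
  exact ((this.differentiableOn one_ne_zero).differentiableAt
    (hU.mem_nhds ⟨hx, hxb⟩)).hasDerivAt

theorem deriv2_pos_iff (hu : IsJumpODESolution r σ g b κ u) {x : ℝ} (hx : 0 ≤ x)
    (hxb : x ∉ range b) (hσx : 0 < σ x ^ 2) :
    0 < deriv (deriv u) x ↔ 0 < curvatureTerm r g b κ u x := by
  rw [← hu.ode x hx hxb]
  exact (mul_pos_iff_of_pos_left (by positivity)).symm

theorem deriv2_neg_iff (hu : IsJumpODESolution r σ g b κ u) {x : ℝ} (hx : 0 ≤ x)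
    (hxb : x ∉ range b) (hσx : 0 < σ x ^ 2) :
    deriv (deriv u) x < 0 ↔ curvatureTerm r g b κ u x < 0 := by
  rw [← hu.ode x hx hxb]
  have : 0 < 1 / 2 * σ x ^ 2 := by positivity
  exact ⟨mul_neg_of_pos_of_neg this, fun h => neg_of_mul_neg_right h this.le⟩

end IsJumpODESolution

end Curvature

section Propagation

variable {k : ℕ} {r : ℝ} {σ g u : ℝ → ℝ} {b κ : Fin k → ℝ}

theorem curvatureTerm_pos_of_forall_notMem_Ioo (hu : IsJumpODESolution r σ g b κ u)
    (hg : Differentiable ℝ g) (hgr : ∀ x ≥ 0, deriv g x < r) (hσ : Continuous σ)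
    (hσpos : ∀ x ≥ 0, 0 < σ x ^ 2) (hκ : ∀ j, 0 ≤ κ j) (hu' : ∀ x ≥ 0, 0 ≤ deriv u x)
    (hcu' : ∀ x ≥ 0, 0 ≤ curvatureTerm r g b κ u x → 0 < deriv u x)
    {y x : ℝ} (hy : 0 ≤ y) (hyx : y < x) (hJ : ∀ j, b j ∉ Ioo y x)
    (hvy : 0 ≤ curvatureTerm r g b κ u y) : 0 < curvatureTerm r g b κ u x := by
  set C := jumpSum b κ y
  set f := fun w => r * u w - (g w - C) * deriv u w
  have hfv : ∀ w ∈ Ico y x, curvatureTerm r g b κ u w = f w := fun w hw => by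
    simp only [curvatureTerm, f, C,
      jumpSum_eq_of_forall_notMem_Ioc b κ hw.1 fun j hj => hJ j ⟨hj.1, hj.2.trans_lt hw.2⟩]
  have := hu.contDiff.continuous
  have := hu.contDiff.continuous_deriv le_rfl
  have := hg.continuous
  have hf : 0 < f x := by
    refine pos_of_hasDerivAt_eq_sub_mul (e := fun w => (r - deriv g w) * deriv u w)
      (q := fun w => 2 * (g w - C) / σ w ^ 2) (by fun_prop) ?_ (fun w hw => ?_)
      (fun w hw => ?_) (fun w hw hfw => ?_) (hfv y ⟨le_rfl, hyx⟩ ▸ hvy) ⟨hyx, le_rfl⟩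
    · exact ContinuousOn.div (by fun_prop) (by fun_prop)
        fun w hw => (hσpos w (hy.trans hw.1)).ne'
    · have hw0 : 0 < w := hy.trans_lt hw.1
      have hwb : w ∉ range b := by rintro ⟨j, rfl⟩; exact hJ j hw
      have hode := hu.ode w hw0.le hwb
      rw [hfv w ⟨hw.1.le, hw.2⟩] at hode
      have hσw : σ w ≠ 0 := fun h => (hσpos w hw0.le).ne' (by simp [h])
      refine (((hu.contDiff.differentiable one_ne_zero w).hasDerivAt.const_mul r).sub
        (((hg w).hasDerivAt.sub_const C).mul (hu.hasDerivAt_deriv hw0 hwb))).congr_deriv ?_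
      rw [← hode]
      field_simp
      ring
    · exact mul_nonneg (sub_nonneg.2 (hgr w (hy.trans hw.1.le)).le) (hu' w (hy.trans hw.1.le))
    · exact mul_pos (sub_pos.2 (hgr w (hy.trans hw.1.le)))
        (hcu' w (hy.trans hw.1.le) (hfv w ⟨hw.1.le, hw.2⟩ ▸ hfw))
  have hC : C ≤ jumpSum b κ x := jumpSum_mono b κ hκ hyx.le
  have hux := hu' x (hy.trans hyx.le)
  calc 0 < f x := hf
    _ ≤ curvatureTerm r g b κ u x := by
      simp only [curvatureTerm, f]
      linarith [mul_le_mul_of_nonneg_right hC hux]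

theorem curvatureTerm_pos_of_nonneg (hu : IsJumpODESolution r σ g b κ u)
    (hg : Differentiable ℝ g) (hgr : ∀ x ≥ 0, deriv g x < r) (hσ : Continuous σ)
    (hσpos : ∀ x ≥ 0, 0 < σ x ^ 2) (hκ : ∀ j, 0 ≤ κ j) (hu' : ∀ x ≥ 0, 0 ≤ deriv u x)
    (hcu' : ∀ x ≥ 0, 0 ≤ curvatureTerm r g b κ u x → 0 < deriv u x)
    {x₀ x : ℝ} (hx₀ : 0 ≤ x₀) (hv : 0 ≤ curvatureTerm r g b κ u x₀) (hx : x₀ < x) :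
    0 < curvatureTerm r g b κ u x := by
  classical
  have step {y x : ℝ} :=
    curvatureTerm_pos_of_forall_notMem_Ioo (y := y) (x := x) hu hg hgr hσ hσpos hκ hu' hcu'
  -- induction on the jumps between `x₀` and `x`, peeling off the last one
  suffices ∀ s : Finset ℝ, ∀ x₀ x, 0 ≤ x₀ → 0 ≤ curvatureTerm r g b κ u x₀ → x₀ < x →
      (∀ j, b j ∈ Ioo x₀ x → b j ∈ s) → 0 < curvatureTerm r g b κ u x from
    this (Finset.univ.image b) x₀ x hx₀ hv hx fun j _ => Finset.mem_image_of_mem b (by simp)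
  intro s
  induction s using Finset.induction_on_max with
  | empty => exact fun x₀ x hx₀ hv hx hs => step hx₀ hx (fun j hj => by simpa using hs j hj) hv
  | insert a s has ih =>
    intro x₀ x hx₀ hv hx hs
    by_cases ha : a ∈ Ioo x₀ x
    · have hva := ih x₀ a hx₀ hv ha.1 fun j hj =>
        (Finset.mem_insert.1 (hs j ⟨hj.1, hj.2.trans ha.2⟩)).resolve_left hj.2.ne
      refine step (hx₀.trans ha.1.le) ha.2 (fun j hj => ?_) hva.le
      rcases Finset.mem_insert.1 (hs j ⟨ha.1.trans hj.1, hj.2⟩) with h | h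
      · exact hj.1.ne' h
      · exact (has _ h).not_gt hj.1
    · exact ih x₀ x hx₀ hv hx fun j hj =>
        (Finset.mem_insert.1 (hs j hj)).resolve_left fun h => ha (h ▸ hj)

end Propagation

namespace IsJumpODESolution

variable {k : ℕ} {r : ℝ} {σ g u : ℝ → ℝ} {b κ : Fin k → ℝ}

theorem strictMonoOn_deriv (hu : IsJumpODESolution r σ g b κ u)
    (hσpos : ∀ x ≥ 0, 0 < σ x ^ 2) {a : ℝ} (ha : 0 ≤ a)
    (h : ∀ x > a, 0 < curvatureTerm r g b κ u x) : StrictMonoOn (deriv u) (Ici a) :=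
  strictMonoOn_of_deriv_pos_of_finite (convex_Ici a) (finite_range b)
    (hu.contDiff.continuous_deriv le_rfl).continuousOn fun x hx => by
      rw [interior_Ici] at hx
      have hx0 : 0 ≤ x := ha.trans (le_of_lt hx.1)
      exact (hu.deriv2_pos_iff hx0 hx.2 (hσpos x hx0)).2 (h x hx.1)

theorem strictAntiOn_deriv (hu : IsJumpODESolution r σ g b κ u)
    (hσpos : ∀ x ≥ 0, 0 < σ x ^ 2) {a : ℝ} (ha : 0 ≤ a)
    (h : ∀ x > a, curvatureTerm r g b κ u x < 0) : StrictAntiOn (deriv u) (Ici a) :=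
  strictAntiOn_of_deriv_neg_of_finite (convex_Ici a) (finite_range b)
    (hu.contDiff.continuous_deriv le_rfl).continuousOn fun x hx => by
      rw [interior_Ici] at hx
      have hx0 : 0 ≤ x := ha.trans (le_of_lt hx.1)
      exact (hu.deriv2_neg_iff hx0 hx.2 (hσpos x hx0)).2 (h x hx.1)

theorem convexOn (hu : IsJumpODESolution r σ g b κ u) (hσpos : ∀ x ≥ 0, 0 < σ x ^ 2) {a : ℝ}
    (ha : 0 ≤ a) (h : ∀ x > a, 0 < curvatureTerm r g b κ u x) : ConvexOn ℝ (Ici a) u :=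
  ((hu.strictMonoOn_deriv hσpos ha h).mono interior_subset).strictConvexOn_of_deriv
    (convex_Ici a) hu.contDiff.continuous.continuousOn |>.convexOn

theorem concaveOn (hu : IsJumpODESolution r σ g b κ u) (hσpos : ∀ x ≥ 0, 0 < σ x ^ 2) {a : ℝ}
    (ha : 0 ≤ a) (h : ∀ x > a, curvatureTerm r g b κ u x < 0) : ConcaveOn ℝ (Ici a) u :=
  ((hu.strictAntiOn_deriv hσpos ha h).mono interior_subset).strictConcaveOn_of_deriv
    (convex_Ici a) hu.contDiff.continuous.continuousOn |>.concaveOn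

theorem deriv_pos_of_pos (hu : IsJumpODESolution r σ g b κ u) (hg : Continuous g)
    (hσpos : ∀ x ≥ 0, 0 < σ x ^ 2) (hr : 0 < r) (hu' : ∀ x ≥ 0, 0 ≤ deriv u x) {x : ℝ}
    (hx : 0 < x) (hux : 0 < u x) : 0 < deriv u x := by
  refine (hu' x hx.le).lt_of_ne' fun h0 => ?_
  set C := ∑ j, if b j < x then κ j else 0
  have := hu.contDiff.continuous
  have := hu.contDiff.continuous_deriv le_rfl
  have hcont : Continuous fun w => r * u w - (g w - C) * deriv u w := by fun_prop
  -- left of `x` the curvature term is close to its left limit `r * u x > 0`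
  have hev : ∀ᶠ w in 𝓝[<] x, 0 < w ∧ w ∉ range b ∧ 0 < curvatureTerm r g b κ u w := by
    have hlim : 0 < r * u x - (g x - C) * deriv u x := by rw [h0]; simpa using mul_pos hr hux
    filter_upwards [nhdsWithin_le_nhds (eventually_gt_nhds hx),
      nhdsWithin_mono _ (fun w (hw : w < x) => hw.ne) (eventually_notMem_range_nhdsNE b x),
      jumpSum_eventuallyEq_nhdsLT b κ x,
      nhdsWithin_le_nhds (hcont.continuousAt.eventually (lt_mem_nhds hlim))]
      with w hw0 hwb hS hw
    exact ⟨hw0, hwb, by simpa only [curvatureTerm, hS] using hw⟩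
  obtain ⟨y, hyx : y < x, hy⟩ := mem_nhdsLT_iff_exists_Ioo_subset.1 hev
  have hmono : StrictMonoOn (deriv u) (Icc y x) :=
    strictMonoOn_of_deriv_pos (convex_Icc y x)
      (hu.contDiff.continuous_deriv le_rfl).continuousOn fun w hw => by
        rw [interior_Icc] at hw
        obtain ⟨hw0, hwb, hcw⟩ := hy hw
        exact (hu.deriv2_pos_iff hw0.le hwb (hσpos w hw0.le)).2 hcw
  have hmid : (y + x) / 2 ∈ Ioo y x := ⟨by linarith, by linarith⟩
  have := hmono (Ioo_subset_Icc_self hmid) (right_mem_Icc.2 hyx.le) hmid.2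
  linarith [hu' _ (hy hmid).1.le]

theorem exists_curvatureTerm_nonneg (hu : IsJumpODESolution r σ g b κ u)
    (hσpos : ∀ x ≥ 0, 0 < σ x ^ 2) (hr : 0 < r) (hκ : ∀ j, 0 ≤ κ j) {c : ℝ} (hc : 0 < c)
    (hgc : g c ≤ r * c - 1 / c) (hu0 : u 0 = 0) (hu' : ∀ x ≥ 0, 0 < deriv u x) :
    ∃ x ≥ 0, 0 ≤ curvatureTerm r g b κ u x := by
  by_contra! hneg
  have hslope := (hu.concaveOn hσpos le_rfl fun x hx => hneg x hx.le).deriv_le_slope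
    self_mem_Ici (mem_Ici.2 hc.le) hc (hu.contDiff.differentiable one_ne_zero c)
  rw [slope_def_field, hu0, sub_zero, sub_zero, le_div_iff₀ hc] at hslope
  have hS : 0 ≤ jumpSum b κ c := Finset.sum_nonneg fun j _ => by split_ifs <;> simp [hκ j]
  have hc' := hu' c hc.le
  have hcurv := hneg c hc.le
  simp only [curvatureTerm] at hcurv
  have h1 : r * (deriv u c * c) ≤ r * u c := mul_le_mul_of_nonneg_left hslope hr.le
  have h2 : (g c - jumpSum b κ c) * deriv u c ≤ (r * c - 1 / c) * deriv u c :=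
    mul_le_mul_of_nonneg_right (by linarith) hc'.le
  have h3 : 0 < 1 / c * deriv u c := by positivity
  linarith

theorem exists_inflection_point (hu : IsJumpODESolution r σ g b κ u)
    (hg : Differentiable ℝ g) (hgr : ∀ x ≥ 0, deriv g x < r) (hσ : Continuous σ)
    (hσpos : ∀ x ≥ 0, 0 < σ x ^ 2) (hr : 0 < r) (hκ : ∀ j, 0 ≤ κ j) (hb : ∀ j, 0 ≤ b j)
    {c : ℝ} (hc : 0 < c) (hgc : g c ≤ r * c - 1 / c) (hu0 : u 0 = 0) (hu'0 : deriv u 0 = 1)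
    (hupos : ∀ x > 0, 0 < u x) (humono : MonotoneOn u (Ici 0)) :
    ∃ bss : ℝ, 0 ≤ bss ∧
      (∀ x, 0 ≤ x → x < bss → x ∉ range b → deriv (deriv u) x < 0) ∧
      (∀ x, bss < x → x ∉ range b → 0 < deriv (deriv u) x) ∧
      (0 < g 0 - ∑ j, (if b j = 0 then κ j else 0) → 0 < bss) ∧
      (g 0 - ∑ j, (if b j = 0 then κ j else 0) ≤ 0 → bss = 0 ∧ ConvexOn ℝ (Ici 0) u) ∧
      (∀ bss' : ℝ, 0 ≤ bss' →
        (∀ x, 0 ≤ x → x < bss' → x ∉ range b → deriv (deriv u) x < 0) →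
        (∀ x, bss' < x → x ∉ range b → 0 < deriv (deriv u) x) → bss' = bss) := by
  have hu' : ∀ x ≥ 0, 0 < deriv u x := by
    intro x hx
    rcases hx.eq_or_lt with rfl | hx
    · simp [hu'0]
    · exact hu.deriv_pos_of_pos hg.continuous hσpos hr (fun y hy => deriv_nonneg_of_monotoneOn_Ici
        humono (hu.contDiff.differentiable one_ne_zero y) hy) hx (hupos x hx)
  obtain ⟨t, ht0, hneg, hpos⟩ := exists_sign_threshold
    (fun x₀ hx₀ hv x hx => curvatureTerm_pos_of_nonneg hu hg hgr hσ hσpos hκ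
      (fun x hx => (hu' x hx).le) (fun x hx _ => hu' x hx) hx₀ hv hx)
    (hu.exists_curvatureTerm_nonneg hσpos hr hκ hc hgc hu0 hu')
  have hF0 : curvatureTerm r g b κ u 0 = -(g 0 - ∑ j, if b j = 0 then κ j else 0) := by
    simp [curvatureTerm, hu0, hu'0, jumpSum_zero b κ hb]
  have hneg2 : ∀ x, 0 ≤ x → x < t → x ∉ range b → deriv (deriv u) x < 0 :=
    fun x hx hxt hxb => (hu.deriv2_neg_iff hx hxb (hσpos x hx)).2 (hneg x hx hxt)
  have hpos2 : ∀ x, t < x → x ∉ range b → 0 < deriv (deriv u) x := fun x hx hxb =>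
    have hx0 := ht0.trans hx.le
    (hu.deriv2_pos_iff hx0 hxb (hσpos x hx0)).2 (hpos x hx)
  refine ⟨t, ht0, hneg2, hpos2, fun h0 => ht0.lt_of_ne fun ht => ?_, fun h0 => ?_,
    fun t' ht' hneg' hpos' => eq_of_sign_threshold (finite_range b) ht0 ht' hneg2 hpos2 hneg' hpos'⟩
  · have : 0 ≤ curvatureTerm r g b κ u 0 :=
      ge_of_tendsto ((continuousWithinAt_curvatureTerm hu.contDiff hg.continuous 0).mono
        Ioi_subset_Ici_self) (eventually_nhdsWithin_of_forall fun x hx => (hpos x (ht ▸ hx)).le)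
    linarith
  · have ht : t = 0 := le_antisymm (not_lt.1 fun h => (hneg 0 le_rfl h).not_ge (by linarith)) ht0
    exact ⟨ht, hu.convexOn hσpos le_rfl fun x hx => hpos x (ht ▸ hx)⟩

theorem curvatureTerm_pos_of_antitoneOn (hu : IsJumpODESolution r σ g b κ u)
    (hg : Differentiable ℝ g) (hgr : ∀ x ≥ 0, deriv g x < r) (hσ : Continuous σ)
    (hσpos : ∀ x ≥ 0, 0 < σ x ^ 2) (hr : 0 < r) (hκ : ∀ j, 0 ≤ κ j)
    (hupos : ∀ x ≥ 0, 0 < u x) (huanti : AntitoneOn u (Ici 0)) {x : ℝ} (hx : 0 ≤ x) :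
    0 < curvatureTerm r g b κ u x := by
  have hud := hu.contDiff.differentiable one_ne_zero
  have hu' : ∀ x ≥ 0, deriv u x ≤ 0 := fun x hx => deriv_nonpos_of_antitoneOn_Ici huanti (hud x) hx
  have hcu' : ∀ x ≥ 0, curvatureTerm r g b κ u x ≤ 0 → deriv u x < 0 := fun x hx hc =>
    (hu' x hx).lt_of_ne fun h0 => by
      simp only [curvatureTerm, h0, mul_zero, sub_zero] at hc
      exact (mul_pos hr (hupos x hx)).not_ge hc
  by_contra! hx0
  -- `-u` is a nondecreasing solution, so the propagation lemma applies to it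
  have hneg : ∀ y > x, curvatureTerm r g b κ u y < 0 := fun y hy => by
    have := curvatureTerm_pos_of_nonneg hu.neg hg hgr hσ hσpos hκ
      (fun z hz => by simpa using hu' z hz)
      (fun z hz hc => by simpa using hcu' z hz (by rw [curvatureTerm_neg] at hc; linarith))
      hx (by rw [curvatureTerm_neg]; linarith) hy
    rw [curvatureTerm_neg] at this
    linarith
  obtain ⟨X, hX, huX⟩ := (hu.concaveOn hσpos (by linarith : 0 ≤ x + 1)
    fun y hy => hneg y (by linarith)).exists_nonpos_of_deriv_neg (hud _)
    (hcu' (x + 1) (by linarith) (hneg (x + 1) (by linarith)).le)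
  exact (hupos X (by linarith)).not_ge huX

theorem deriv_neg_and_deriv2_pos_and_convexOn (hu : IsJumpODESolution r σ g b κ u)
    (hg : Differentiable ℝ g) (hgr : ∀ x ≥ 0, deriv g x < r) (hσ : Continuous σ)
    (hσpos : ∀ x ≥ 0, 0 < σ x ^ 2) (hr : 0 < r) (hκ : ∀ j, 0 ≤ κ j)
    (hupos : ∀ x ≥ 0, 0 < u x) (huanti : AntitoneOn u (Ici 0)) :
    (∀ x ≥ 0, deriv u x < 0) ∧ (∀ x, 0 ≤ x → x ∉ range b → 0 < deriv (deriv u) x) ∧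
      ConvexOn ℝ (Ici 0) u := by
  have hcurv := fun x (hx : 0 ≤ x) =>
    hu.curvatureTerm_pos_of_antitoneOn hg hgr hσ hσpos hr hκ hupos huanti hx
  have hmono := hu.strictMonoOn_deriv hσpos le_rfl fun x hx => hcurv x hx.le
  refine ⟨fun x hx => ?_, fun x hx hxb => (hu.deriv2_pos_iff hx hxb (hσpos x hx)).2 (hcurv x hx),
    hu.convexOn hσpos le_rfl fun x hx => hcurv x hx.le⟩
  have hx1 : (0 : ℝ) ≤ x + 1 := by linarith
  exact (hmono hx hx1 (by linarith)).trans_le (deriv_nonpos_of_antitoneOn_Ici huanti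
    ((hu.contDiff.differentiable one_ne_zero) _) hx1)

end IsJumpODESolution

theorem stmt_12_general
    (r c : ℝ) (hr : 0 < r) (hc : 0 < c)
    (μ σ : ℝ → ℝ) (hμ : ContDiff ℝ 1 μ) (hσ : ContDiff ℝ 1 σ)
    (hσpos : ∀ x ≥ (0:ℝ), 0 < σ x ^ 2)
    (hμderiv : ∀ x ≥ (0:ℝ), deriv μ x < r)
    (hμc : ∀ x ≥ c, μ x ≤ r * x - 1 / c)
    (k : ℕ) (b κ : Fin k → ℝ) (hbnn : ∀ j, 0 ≤ b j) (hκ : ∀ j, 0 < κ j)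
    (μt : ℝ → ℝ)
    (hμt : ∀ x, μt x = μ x - ∑ j, (if b j ≤ x then κ j else 0))
    (ψt : ℝ → ℝ)
    (hψtC1 : ContDiff ℝ 1 ψt)
    (hψtC2 : ContDiffOn ℝ 2 ψt (Ici (0:ℝ) \ Set.range b))
    (hψt0 : ψt 0 = 0) (hψtd0 : deriv ψt 0 = 1)
    (hψtpos : ∀ x > (0:ℝ), 0 < ψt x)
    (hψtmono : MonotoneOn ψt (Ici (0:ℝ)))
    (hψtODE : ∀ x, 0 ≤ x → x ∉ Set.range b →
      (1/2) * σ x ^ 2 * deriv (deriv ψt) x + μt x * deriv ψt x - r * ψt x = 0)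
    (K : ℝ)
    (φt : ℝ → ℝ)
    (hφtC1 : ContDiff ℝ 1 φt)
    (hφtC2 : ContDiffOn ℝ 2 φt (Ici (0:ℝ) \ Set.range b))
    (hφtpos : ∀ x ≥ (0:ℝ), 0 < φt x)
    (hφtanti : AntitoneOn φt (Ici (0:ℝ)))
    (hφtODE : ∀ x, 0 ≤ x → x ∉ Set.range b →
      (1/2) * σ x ^ 2 * deriv (deriv φt) x + (μt x - K) * deriv φt x - r * φt x = 0) :
    (∃ bss : ℝ, 0 ≤ bss ∧
      (∀ x, 0 ≤ x → x < bss → x ∉ Set.range b → deriv (deriv ψt) x < 0) ∧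
      (∀ x, bss < x → x ∉ Set.range b → 0 < deriv (deriv ψt) x) ∧
      (0 < μ 0 - ∑ j, (if b j = 0 then κ j else 0) → 0 < bss) ∧
      (μ 0 - ∑ j, (if b j = 0 then κ j else 0) ≤ 0 →
        bss = 0 ∧ ConvexOn ℝ (Ici (0:ℝ)) ψt) ∧
      (∀ bss' : ℝ, 0 ≤ bss' →
        (∀ x, 0 ≤ x → x < bss' → x ∉ Set.range b → deriv (deriv ψt) x < 0) →
        (∀ x, bss' < x → x ∉ Set.range b → 0 < deriv (deriv ψt) x) → bss' = bss)) ∧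
    (∀ x ≥ (0:ℝ), deriv φt x < 0) ∧
    (∀ x, 0 ≤ x → x ∉ Set.range b → 0 < deriv (deriv φt) x) ∧
    ConvexOn ℝ (Ici (0:ℝ)) φt := by
  have hμd : Differentiable ℝ μ := hμ.differentiable one_ne_zero
  have hκ' : ∀ j, 0 ≤ κ j := fun j => (hκ j).le
  have hψ : IsJumpODESolution r σ μ b κ ψt := ⟨hψtC1, hψtC2, fun x hx hxb => by
    have := hψtODE x hx hxb
    rw [hμt] at this
    simp only [curvatureTerm, jumpSum]
    linarith⟩
  have hφ : IsJumpODESolution r σ (fun x => μ x - K) b κ φt := ⟨hφtC1, hφtC2, fun x hx hxb => by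
    have := hφtODE x hx hxb
    rw [hμt] at this
    simp only [curvatureTerm, jumpSum]
    linarith⟩
  exact ⟨hψ.exists_inflection_point hμd hμderiv hσ.continuous hσpos hr hκ' hbnn hc
      (hμc c le_rfl) hψt0 hψtd0 hψtpos hψtmono,
    hφ.deriv_neg_and_deriv2_pos_and_convexOn (hμd.sub_const K) (by simpa using hμderiv)
      hσ.continuous hσpos hr hκ' hφtpos hφtanti⟩

/-- concave–convex structure of the fundamental solutions for a drift
with finitely many negative jumps at J = {b₁,…,b_k} with sizes κ₁,…,κ_k:
(i) ψ̃ has a unique inflection point b** ∈ [0,∞) (with sign conditions off J);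
b** > 0 if μ(0) − Σ_{j : b_j = 0} κ_j > 0, and otherwise b** = 0 and ψ̃ is convex;
(ii) φ̃' < 0 everywhere on [0,∞), φ̃'' > 0 off J, and φ̃ is convex on [0,∞). -/
theorem stmt_12
    (r c : ℝ) (hr : 0 < r) (hc : 0 < c)
    (μ σ : ℝ → ℝ) (hμ : ContDiff ℝ 1 μ) (hσ : ContDiff ℝ 1 σ)
    (hσpos : ∀ x ≥ (0:ℝ), 0 < σ x ^ 2)
    (hμderiv : ∀ x ≥ (0:ℝ), deriv μ x < r)
    (hμc : ∀ x ≥ c, μ x ≤ r * x - 1 / c)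
    (k : ℕ) (b κ : Fin k → ℝ) (hbnn : ∀ j, 0 ≤ b j) (hκ : ∀ j, 0 < κ j)
    (μt : ℝ → ℝ)
    (hμt : ∀ x, μt x = μ x - ∑ j, (if b j ≤ x then κ j else 0))
    (ψt : ℝ → ℝ)
    (hψtC1 : ContDiff ℝ 1 ψt)
    (hψtC2 : ContDiffOn ℝ 2 ψt (Ici (0:ℝ) \ Set.range b))
    (hψt0 : ψt 0 = 0) (hψtd0 : deriv ψt 0 = 1)
    (hψtpos : ∀ x > (0:ℝ), 0 < ψt x)
    (hψtmono : MonotoneOn ψt (Ici (0:ℝ)))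
    (hψtODE : ∀ x, 0 ≤ x → x ∉ Set.range b →
      (1/2) * σ x ^ 2 * deriv (deriv ψt) x + μt x * deriv ψt x - r * ψt x = 0)
    (K : ℝ) (hK : 0 < K)
    (φt : ℝ → ℝ)
    (hφtC1 : ContDiff ℝ 1 φt)
    (hφtC2 : ContDiffOn ℝ 2 φt (Ici (0:ℝ) \ Set.range b))
    (hφtpos : ∀ x ≥ (0:ℝ), 0 < φt x)
    (hφtanti : AntitoneOn φt (Ici (0:ℝ)))
    (hφtlim : Tendsto φt atTop (nhds 0))
    (hφtODE : ∀ x, 0 ≤ x → x ∉ Set.range b →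
      (1/2) * σ x ^ 2 * deriv (deriv φt) x + (μt x - K) * deriv φt x - r * φt x = 0) :
    (∃ bss : ℝ, 0 ≤ bss ∧
      (∀ x, 0 ≤ x → x < bss → x ∉ Set.range b → deriv (deriv ψt) x < 0) ∧
      (∀ x, bss < x → x ∉ Set.range b → 0 < deriv (deriv ψt) x) ∧
      (0 < μ 0 - ∑ j, (if b j = 0 then κ j else 0) → 0 < bss) ∧
      (μ 0 - ∑ j, (if b j = 0 then κ j else 0) ≤ 0 →
        bss = 0 ∧ ConvexOn ℝ (Ici (0:ℝ)) ψt) ∧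
      (∀ bss' : ℝ, 0 ≤ bss' →
        (∀ x, 0 ≤ x → x < bss' → x ∉ Set.range b → deriv (deriv ψt) x < 0) →
        (∀ x, bss' < x → x ∉ Set.range b → 0 < deriv (deriv ψt) x) → bss' = bss)) ∧
    (∀ x ≥ (0:ℝ), deriv φt x < 0) ∧
    (∀ x, 0 ≤ x → x ∉ Set.range b → 0 < deriv (deriv φt) x) ∧
    ConvexOn ℝ (Ici (0:ℝ)) φt :=
  stmt_12_general r c hr hc μ σ hμ hσ hσpos hμderiv hμc k b κ hbnn hκ μt hμt ψt hψtC1 hψtC2 hψt0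
    hψtd0 hψtpos hψtmono hψtODE K φt hφtC1 hφtC2 hφtpos hφtanti hφtODE
end

section
/- Let J = {b₁, …, b_k} ⊂ [0,∞) be a finite set and κ₁, …, κ_k > 0, and define μ̃(x) := μ(x) − Σ_{j : x ≥ b_j} κ_j. Let ψ̃ : [0,∞) → ℝ be continuously differentiable, twice continuously differentiable on [0,∞)∖J, with ψ̃(0) = 0, ψ̃'(x) > 0 for all x ≥ 0, and ½σ(x)²ψ̃''(x) + μ̃(x)ψ̃'(x) − r·ψ̃(x) = 0 for all x ∈ [0,∞)∖J. If x ≥ 0 is such that x ∉ J and ψ̃''(y) ≤ 0 for all y ∈ [0,x]∖J, then x < c. In particular, the inflection point of ψ̃ is bounded by the constant c, uniformly in the choice of b₁, …, b_k. -/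
/-!
Suppose `c ≤ x`. Since `ψ̃'' ≤ 0` on `[0, x]` off the finitely many jump points and `ψ̃'` is
continuous, `ψ̃'` is antitone on `[0, x]`, so `ψ̃(x) = ψ̃(x) - ψ̃(0) ≥ x ψ̃'(x)`. At `x` the ODE
with `ψ̃''(x) ≤ 0` gives `r ψ̃(x) ≤ μ̃(x) ψ̃'(x)`, and the jumps only lower the drift, so
`μ̃(x) ≤ r x - 1/c`. Hence `r ψ̃(x) ≤ r x ψ̃'(x) - ψ̃'(x)/c < r ψ̃(x)`, a contradiction.
-/

open Set

theorem antitoneOn_Icc_of_deriv_nonpos_off_finite {f : ℝ → ℝ} {s : Set ℝ} (hs : s.Finite)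
    {a b : ℝ} (hf : ContinuousOn f (Icc a b))
    (hdiff : ∀ y ∈ Ioo a b \ s, DifferentiableAt ℝ f y)
    (hderiv : ∀ y ∈ Ioo a b \ s, deriv f y ≤ 0) :
    AntitoneOn f (Icc a b) := by
  induction s, hs using Set.Finite.induction_on generalizing a b with
  | empty =>
    simp only [sdiff_empty] at hdiff hderiv
    refine antitoneOn_of_deriv_nonpos (convex_Icc a b) hf ?_ ?_ <;> rw [interior_Icc]
    · exact fun y hy => (hdiff y hy).differentiableWithinAt
    · exact hderiv
  | @insert p s _ _ ih =>
    by_cases hp : p ∈ Ioo a b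
    · have hsub_left : Ioo a p \ s ⊆ Ioo a b \ insert p s := fun y hy =>
        ⟨⟨hy.1.1, hy.1.2.trans hp.2⟩, by simp [hy.1.2.ne, hy.2]⟩
      have hsub_right : Ioo p b \ s ⊆ Ioo a b \ insert p s := fun y hy =>
        ⟨⟨hp.1.trans hy.1.1, hy.1.2⟩, by simp [hy.1.1.ne', hy.2]⟩
      have hleft : AntitoneOn f (Icc a p) :=
        ih (hf.mono (Icc_subset_Icc_right hp.2.le)) (fun y hy => hdiff y (hsub_left hy))
          (fun y hy => hderiv y (hsub_left hy))
      have hright : AntitoneOn f (Icc p b) :=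
        ih (hf.mono (Icc_subset_Icc_left hp.1.le)) (fun y hy => hdiff y (hsub_right hy))
          (fun y hy => hderiv y (hsub_right hy))
      rw [← Icc_union_Icc_eq_Icc hp.1.le hp.2.le]
      exact hleft.union_right hright (isGreatest_Icc hp.1.le) (isLeast_Icc hp.2.le)
    · rw [insert_eq, ← sdiff_sdiff, (disjoint_singleton_right.2 hp).sdiff_eq_left] at hdiff hderiv
      exact ih hf hdiff hderiv

theorem deriv_mul_le_sub_of_antitoneOn_deriv {f : ℝ → ℝ} {a b : ℝ} (hab : a ≤ b)
    (hf : ContinuousOn f (Icc a b)) (hdiff : DifferentiableOn ℝ f (Ioo a b))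
    (hanti : AntitoneOn (deriv f) (Icc a b)) :
    deriv f b * (b - a) ≤ f b - f a := by
  refine (convex_Icc a b).mul_sub_le_image_sub_of_le_deriv hf (by rwa [interior_Icc]) ?_
    a (left_mem_Icc.2 hab) b (right_mem_Icc.2 hab) hab
  rw [interior_Icc]
  exact fun y hy => hanti (Ioo_subset_Icc_self hy) (right_mem_Icc.2 hab) hy.2.le

theorem differentiableAt_deriv_of_contDiffOn_two {f : ℝ → ℝ} {s : Set ℝ} {y : ℝ}
    (hf : ContDiffOn ℝ 2 f s) (hs : s ∈ nhds y) : DifferentiableAt ℝ (deriv f) y :=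
  ((hf.contDiffAt hs).derivWithin (m := 1) (by norm_num)).differentiableAt one_ne_zero

theorem stmt_13_general
    (r c : ℝ) (hr : 0 < r) (hc : 0 < c)
    (μ σ : ℝ → ℝ)
    (hμc : ∀ x ≥ c, μ x ≤ r * x - 1 / c)
    (k : ℕ) (b κ : Fin k → ℝ) (hκ : ∀ j, 0 < κ j)
    (μt : ℝ → ℝ)
    (hμt : ∀ x, μt x = μ x - ∑ j, (if b j ≤ x then κ j else 0))
    (ψt : ℝ → ℝ)
    (hψtC1 : ContDiff ℝ 1 ψt)
    (hψtC2 : ContDiffOn ℝ 2 ψt (Ici (0:ℝ) \ Set.range b))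
    (hψt0 : ψt 0 = 0)
    (hψtdpos : ∀ x ≥ (0:ℝ), 0 < deriv ψt x)
    (hψtODE : ∀ x, 0 ≤ x → x ∉ Set.range b →
      (1/2) * σ x ^ 2 * deriv (deriv ψt) x + μt x * deriv ψt x - r * ψt x = 0) :
    ∀ x, 0 ≤ x → x ∉ Set.range b →
      (∀ y, 0 ≤ y → y ≤ x → y ∉ Set.range b → deriv (deriv ψt) y ≤ 0) →
      x < c := by
  intro x hx hxb hconc
  by_contra! hcx
  have hanti : AntitoneOn (deriv ψt) (Icc 0 x) :=
    antitoneOn_Icc_of_deriv_nonpos_off_finite (finite_range b)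
      hψtC1.continuous_deriv_one.continuousOn
      (fun y hy => differentiableAt_deriv_of_contDiffOn_two hψtC2
        (Filter.inter_mem (Ici_mem_nhds hy.1.1) ((finite_range b).isClosed.compl_mem_nhds hy.2)))
      (fun y hy => hconc y hy.1.1.le hy.1.2.le hy.2)
  have hchord : deriv ψt x * x ≤ ψt x := by
    simpa [hψt0] using deriv_mul_le_sub_of_antitoneOn_deriv hx hψtC1.continuous.continuousOn
      (hψtC1.differentiable one_ne_zero).differentiableOn hanti
  have hdrift : μt x ≤ r * x - 1 / c := by
    have hjumps : 0 ≤ ∑ j, (if b j ≤ x then κ j else 0) :=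
      Finset.sum_nonneg fun j _ => ite_nonneg (hκ j).le le_rfl
    linarith [hμt x, hμc x hcx]
  have hψ'x := hψtdpos x hx
  refine lt_irrefl (r * ψt x) ?_
  calc r * ψt x ≤ μt x * deriv ψt x := by
        nlinarith [hψtODE x hx hxb,
          mul_nonneg (sq_nonneg (σ x)) (neg_nonneg.2 (hconc x hx le_rfl hxb))]
    _ ≤ (r * x - 1 / c) * deriv ψt x := mul_le_mul_of_nonneg_right hdrift hψ'x.le
    _ < r * (deriv ψt x * x) := by nlinarith [mul_pos (one_div_pos.2 hc) hψ'x]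
    _ ≤ r * ψt x := mul_le_mul_of_nonneg_left hchord hr.le

/-- the inflection point of the fundamental increasing solution ψ̃
for the drift with finitely many negative jumps is bounded by c, uniformly in the
jump locations: if x ∉ J and ψ̃'' ≤ 0 on [0,x] ∖ J then x < c. -/
theorem stmt_13
    (r c : ℝ) (hr : 0 < r) (hc : 0 < c)
    (μ σ : ℝ → ℝ) (hμ : ContDiff ℝ 1 μ) (hσ : ContDiff ℝ 1 σ)
    (hσpos : ∀ x ≥ (0:ℝ), 0 < σ x ^ 2)
    (hμderiv : ∀ x ≥ (0:ℝ), deriv μ x < r)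
    (hμc : ∀ x ≥ c, μ x ≤ r * x - 1 / c)
    (k : ℕ) (b κ : Fin k → ℝ) (hbnn : ∀ j, 0 ≤ b j) (hκ : ∀ j, 0 < κ j)
    (μt : ℝ → ℝ)
    (hμt : ∀ x, μt x = μ x - ∑ j, (if b j ≤ x then κ j else 0))
    (ψt : ℝ → ℝ)
    (hψtC1 : ContDiff ℝ 1 ψt)
    (hψtC2 : ContDiffOn ℝ 2 ψt (Ici (0:ℝ) \ Set.range b))
    (hψt0 : ψt 0 = 0)
    (hψtdpos : ∀ x ≥ (0:ℝ), 0 < deriv ψt x)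
    (hψtODE : ∀ x, 0 ≤ x → x ∉ Set.range b →
      (1/2) * σ x ^ 2 * deriv (deriv ψt) x + μt x * deriv ψt x - r * ψt x = 0) :
    ∀ x, 0 ≤ x → x ∉ Set.range b →
      (∀ y, 0 ≤ y → y ≤ x → y ∉ Set.range b → deriv (deriv ψt) y ≤ 0) →
      x < c :=
  stmt_13_general r c hr hc μ σ hμc k b κ hκ μt hμt ψt hψtC1 hψtC2 hψt0 hψtdpos hψtODE
end

section
/- Let n ≥ 1 be an integer and K > 0, and define f(b) := ψ(b)/ψ'(b) − φ_{nK}(b)/φ_{nK}'(b) for b ≥ 0. Then for every b ≥ 0 one has (σ(b)²/2)·f'(b) ≥ (ψ(b)/ψ'(b))·(nK − r·f(b)). In particular, f is nondecreasing at every point b where f(b) ≤ nK/r. -/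
/-!
Write `u = ψ/ψ'` and `v = φ/φ'`. Each ODE `½σ²g'' + m g' - r g = 0` turns the quotient `g/g'`
into a solution of the Riccati equation `½σ² w' = ½σ² + m w - r w²`. Subtracting the two Riccati
equations, `½σ² f' - u (nK - r f) = (u - v) (μ - nK - r v)`. Here `u ≥ 0 > v`, and by the ODE of
`φ` the second factor equals `-½σ² φ''/φ'`, which is nonnegative because `φ` is convex and
decreasing.
-/

theorem hasDerivAt_div_deriv {g : ℝ → ℝ} {x : ℝ} (hg : DifferentiableAt ℝ g x)
    (hg' : DifferentiableAt ℝ (deriv g) x) (hne : deriv g x ≠ 0) :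
    HasDerivAt (fun y => g y / deriv g y)
      (1 - g x * deriv (deriv g) x / deriv g x ^ 2) x :=
  (hg.hasDerivAt.div hg'.hasDerivAt hne).congr_deriv (by field_simp)

theorem half_mul_deriv_div_deriv_of_ode {g : ℝ → ℝ} {x s m r : ℝ}
    (hg : DifferentiableAt ℝ g x) (hg' : DifferentiableAt ℝ (deriv g) x) (hne : deriv g x ≠ 0)
    (hode : (1/2) * s * deriv (deriv g) x + m * deriv g x - r * g x = 0) :
    s / 2 * deriv (fun y => g y / deriv g y) x
      = s / 2 + m * (g x / deriv g x) - r * (g x / deriv g x) ^ 2 := by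
  rw [(hasDerivAt_div_deriv hg hg' hne).deriv]
  field_simp
  linear_combination (-2 * g x) * hode

theorem mul_sub_le_half_mul_deriv_sub_div_deriv {P Q : ℝ → ℝ} {x s m A r : ℝ}
    (hPd : DifferentiableAt ℝ P x) (hPd' : DifferentiableAt ℝ (deriv P) x)
    (hQd : DifferentiableAt ℝ Q x) (hQd' : DifferentiableAt ℝ (deriv Q) x)
    (hP : 0 ≤ P x) (hP' : 0 < deriv P x) (hQ : 0 < Q x) (hQ' : deriv Q x < 0)
    (hQ'' : 0 ≤ deriv (deriv Q) x) (hs : 0 ≤ s)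
    (hodeP : (1/2) * s * deriv (deriv P) x + m * deriv P x - r * P x = 0)
    (hodeQ : (1/2) * s * deriv (deriv Q) x + (m - A) * deriv Q x - r * Q x = 0) :
    P x / deriv P x * (A - r * (P x / deriv P x - Q x / deriv Q x))
      ≤ s / 2 * deriv (fun y => P y / deriv P y - Q y / deriv Q y) x := by
  have hdrift : m - A - r * (Q x / deriv Q x) = -(s / 2 * deriv (deriv Q) x / deriv Q x) := by
    field_simp [hQ'.ne]
    linear_combination 2 * hodeQ
  set u := P x / deriv P x
  set v := Q x / deriv Q x
  have hderiv : deriv (fun y => P y / deriv P y - Q y / deriv Q y) x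
      = deriv (fun y => P y / deriv P y) x - deriv (fun y => Q y / deriv Q y) x :=
    deriv_sub ((hasDerivAt_div_deriv hPd hPd' hP'.ne').differentiableAt)
      ((hasDerivAt_div_deriv hQd hQd' hQ'.ne).differentiableAt)
  have hRiccatiP := half_mul_deriv_div_deriv_of_ode hPd hPd' hP'.ne' hodeP
  have hRiccatiQ := half_mul_deriv_div_deriv_of_ode hQd hQd' hQ'.ne hodeQ
  have hu : 0 ≤ u := div_nonneg hP hP'.le
  have hv : v < 0 := div_neg_of_pos_of_neg hQ hQ'
  have hdrift_nonneg : 0 ≤ m - A - r * v := by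
    rw [hdrift, neg_nonneg]
    exact div_nonpos_of_nonneg_of_nonpos (by positivity) hQ'.le
  have hgap : s / 2 * deriv (fun y => P y / deriv P y - Q y / deriv Q y) x
      - u * (A - r * (u - v)) = (u - v) * (m - A - r * v) := by
    rw [hderiv, mul_sub, hRiccatiP, hRiccatiQ]
    ring
  linarith [mul_nonneg (by linarith : 0 ≤ u - v) hdrift_nonneg]

theorem stmt_14_general
    (r : ℝ) (hr : 0 < r)
    (μ σ : ℝ → ℝ)
    (hσpos : ∀ x ≥ (0:ℝ), 0 < σ x ^ 2)
    (ψ : ℝ → ℝ) (hψC : ContDiff ℝ 3 ψ)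
    (hψ0 : ψ 0 = 0)
    (hψpos : ∀ x > (0:ℝ), 0 < ψ x)
    (hψdpos : ∀ x ≥ (0:ℝ), 0 < deriv ψ x)
    (hψODE : ∀ x ≥ (0:ℝ),
      (1/2) * σ x ^ 2 * deriv (deriv ψ) x + μ x * deriv ψ x - r * ψ x = 0)
    (φ : ℝ → ℝ → ℝ)
    (hφC : ∀ A ≥ (0:ℝ), ContDiff ℝ 2 (φ A))
    (hφpos : ∀ A ≥ (0:ℝ), ∀ x ≥ (0:ℝ), 0 < φ A x)
    (hφdneg : ∀ A ≥ (0:ℝ), ∀ x ≥ (0:ℝ), deriv (φ A) x < 0)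
    (hφddnn : ∀ A ≥ (0:ℝ), ∀ x ≥ (0:ℝ), 0 ≤ deriv (deriv (φ A)) x)
    (hφODE : ∀ A ≥ (0:ℝ), ∀ x ≥ (0:ℝ),
      (1/2) * σ x ^ 2 * deriv (deriv (φ A)) x + (μ x - A) * deriv (φ A) x - r * φ A x = 0)
    (n : ℕ) (K : ℝ) (hK : 0 < K)
    (f : ℝ → ℝ)
    (hf : ∀ b, f b = ψ b / deriv ψ b
      - φ ((n : ℝ) * K) b / deriv (φ ((n : ℝ) * K)) b) :
    (∀ b ≥ (0:ℝ),
      (ψ b / deriv ψ b) * ((n : ℝ) * K - r * f b) ≤ (σ b ^ 2 / 2) * deriv f b) ∧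
    (∀ b ≥ (0:ℝ), f b ≤ (n : ℝ) * K / r → 0 ≤ deriv f b) := by
  set A : ℝ := (n : ℝ) * K
  have hA : 0 ≤ A := by positivity
  have hψ2 : ContDiff ℝ 2 ψ := hψC.of_le (by norm_num)
  have hψ_nonneg : ∀ b ≥ (0:ℝ), 0 ≤ ψ b := fun b hb =>
    hb.eq_or_lt.elim (fun h => h ▸ hψ0.ge) (fun h => (hψpos b h).le)
  obtain rfl : f = fun b => ψ b / deriv ψ b - φ A b / deriv (φ A) b := funext hf
  have key : ∀ b ≥ (0:ℝ),
      ψ b / deriv ψ b * (A - r * (ψ b / deriv ψ b - φ A b / deriv (φ A) b))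
        ≤ σ b ^ 2 / 2 * deriv (fun b => ψ b / deriv ψ b - φ A b / deriv (φ A) b) b :=
    fun b hb => mul_sub_le_half_mul_deriv_sub_div_deriv
      (hψ2.differentiable (by norm_num) b) (hψ2.differentiable_deriv_two b)
      ((hφC A hA).differentiable (by norm_num) b) ((hφC A hA).differentiable_deriv_two b)
      (hψ_nonneg b hb) (hψdpos b hb) (hφpos A hA b hb) (hφdneg A hA b hb) (hφddnn A hA b hb)
      (hσpos b hb).le (hψODE b hb) (hφODE A hA b hb)
  refine ⟨key, fun b hb hfb => ?_⟩
  have hgap : 0 ≤ A - r * (ψ b / deriv ψ b - φ A b / deriv (φ A) b) := by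
    rw [le_div_iff₀ hr] at hfb
    linarith
  have hlhs := mul_nonneg (div_nonneg (hψ_nonneg b hb) (hψdpos b hb).le) hgap
  exact nonneg_of_mul_nonneg_right (hlhs.trans (key b hb)) (by linarith [hσpos b hb])

/-- the key differential inequality for
f(b) = ψ(b)/ψ'(b) − φ_{nK}(b)/φ_{nK}'(b): one has
(σ(b)²/2)·f'(b) ≥ (ψ(b)/ψ'(b))·(nK − r·f(b)) for b ≥ 0, so f is nondecreasing
at every point where f(b) ≤ nK/r. -/
theorem stmt_14
    (r : ℝ) (hr : 0 < r)
    (μ σ : ℝ → ℝ) (hμ : ContDiff ℝ 1 μ) (hσ : ContDiff ℝ 1 σ)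
    (hσpos : ∀ x ≥ (0:ℝ), 0 < σ x ^ 2)
    (ψ : ℝ → ℝ) (hψC : ContDiff ℝ 3 ψ)
    (hψ0 : ψ 0 = 0) (hψd0 : deriv ψ 0 = 1)
    (hψpos : ∀ x > (0:ℝ), 0 < ψ x)
    (hψdpos : ∀ x ≥ (0:ℝ), 0 < deriv ψ x)
    (hψODE : ∀ x ≥ (0:ℝ),
      (1/2) * σ x ^ 2 * deriv (deriv ψ) x + μ x * deriv ψ x - r * ψ x = 0)
    (φ : ℝ → ℝ → ℝ)
    (hφC : ∀ A ≥ (0:ℝ), ContDiff ℝ 2 (φ A))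
    (hφ0 : ∀ A ≥ (0:ℝ), φ A 0 = 1)
    (hφpos : ∀ A ≥ (0:ℝ), ∀ x ≥ (0:ℝ), 0 < φ A x)
    (hφdneg : ∀ A ≥ (0:ℝ), ∀ x ≥ (0:ℝ), deriv (φ A) x < 0)
    (hφddnn : ∀ A ≥ (0:ℝ), ∀ x ≥ (0:ℝ), 0 ≤ deriv (deriv (φ A)) x)
    (hφODE : ∀ A ≥ (0:ℝ), ∀ x ≥ (0:ℝ),
      (1/2) * σ x ^ 2 * deriv (deriv (φ A)) x + (μ x - A) * deriv (φ A) x - r * φ A x = 0)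
    (n : ℕ) (hn : 1 ≤ n) (K : ℝ) (hK : 0 < K)
    (f : ℝ → ℝ)
    (hf : ∀ b, f b = ψ b / deriv ψ b
      - φ ((n : ℝ) * K) b / deriv (φ ((n : ℝ) * K)) b) :
    (∀ b ≥ (0:ℝ),
      (ψ b / deriv ψ b) * ((n : ℝ) * K - r * f b) ≤ (σ b ^ 2 / 2) * deriv f b) ∧
    (∀ b ≥ (0:ℝ), f b ≤ (n : ℝ) * K / r → 0 ≤ deriv f b) :=
  stmt_14_general r hr μ σ hσpos ψ hψC hψ0 hψpos hψdpos hψODE φ hφC hφpos hφdneg hφddnn hφODE n K hK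
    f hf
end

section
/- Let n ≥ 1 be an integer and K > 0, define f(b) := ψ(b)/ψ'(b) − φ_{nK}(b)/φ_{nK}'(b), and let b* > 0 be a point with ψ''(b*) = 0. Then f(b*) ≥ nK/r. -/
open Set Filter

/-- at a point b* > 0 where ψ''(b*) = 0 one has
f(b*) = ψ(b*)/ψ'(b*) − φ_{nK}(b*)/φ_{nK}'(b*) ≥ nK/r. -/
theorem stmt_15
    (r : ℝ) (hr : 0 < r)
    (μ σ : ℝ → ℝ) (hμ : ContDiff ℝ 1 μ) (hσ : ContDiff ℝ 1 σ)
    (hσpos : ∀ x ≥ (0:ℝ), 0 < σ x ^ 2)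
    (ψ : ℝ → ℝ) (hψC : ContDiff ℝ 3 ψ)
    (hψ0 : ψ 0 = 0) (hψd0 : deriv ψ 0 = 1)
    (hψpos : ∀ x > (0:ℝ), 0 < ψ x)
    (hψdpos : ∀ x ≥ (0:ℝ), 0 < deriv ψ x)
    (hψODE : ∀ x ≥ (0:ℝ),
      (1/2) * σ x ^ 2 * deriv (deriv ψ) x + μ x * deriv ψ x - r * ψ x = 0)
    (φ : ℝ → ℝ → ℝ)
    (hφC : ∀ A ≥ (0:ℝ), ContDiff ℝ 2 (φ A))
    (hφ0 : ∀ A ≥ (0:ℝ), φ A 0 = 1)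
    (hφpos : ∀ A ≥ (0:ℝ), ∀ x ≥ (0:ℝ), 0 < φ A x)
    (hφdneg : ∀ A ≥ (0:ℝ), ∀ x ≥ (0:ℝ), deriv (φ A) x < 0)
    (hφddnn : ∀ A ≥ (0:ℝ), ∀ x ≥ (0:ℝ), 0 ≤ deriv (deriv (φ A)) x)
    (hφODE : ∀ A ≥ (0:ℝ), ∀ x ≥ (0:ℝ),
      (1/2) * σ x ^ 2 * deriv (deriv (φ A)) x + (μ x - A) * deriv (φ A) x - r * φ A x = 0)
    (n : ℕ) (hn : 1 ≤ n) (K : ℝ) (hK : 0 < K)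
    (f : ℝ → ℝ)
    (hf : ∀ b, f b = ψ b / deriv ψ b
      - φ ((n : ℝ) * K) b / deriv (φ ((n : ℝ) * K)) b)
    (bstar : ℝ) (hbstar : 0 < bstar)
    (hinfl : deriv (deriv ψ) bstar = 0) :
    (n : ℝ) * K / r ≤ f bstar := by
  set A : ℝ := (n : ℝ) * K with hA
  have hA0 : (0:ℝ) ≤ A := by positivity
  have hb0 : (0:ℝ) ≤ bstar := hbstar.le
  have hψ' : 0 < deriv ψ bstar := hψdpos bstar hb0
  have hφ' : deriv (φ A) bstar < 0 := hφdneg A hA0 bstar hb0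
  have hφp : 0 < φ A bstar := hφpos A hA0 bstar hb0
  have hφ'' : 0 ≤ deriv (deriv (φ A)) bstar := hφddnn A hA0 bstar hb0
  have hσ2 : 0 < σ bstar ^ 2 := hσpos bstar hb0
  have hψe := hψODE bstar hb0
  have hφe := hφODE A hA0 bstar hb0
  have h1 : ψ bstar / deriv ψ bstar = μ bstar / r := by
    rw [hinfl] at hψe
    field_simp
    nlinarith
  have h2 : φ A bstar / deriv (φ A) bstar ≤ (μ bstar - A) / r := by
    rw [div_le_iff_of_neg hφ', div_mul_eq_mul_div, div_le_iff₀ hr]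
    nlinarith
  have h3 : A / r = μ bstar / r - (μ bstar - A) / r := by ring
  rw [hf, h1, h3]
  linarith
end

section
/- Let 0 ≤ A ≤ B be constants and let φ_A and φ_B be the corresponding fundamental decreasing solutions. Then φ_A'(0) ≤ φ_B'(0), and for every x ≥ 0 one has −φ_A(x)/φ_A'(x) ≤ −φ_B(x)/φ_B'(x). -/
/-!
Fix `x₀ ≥ 0` and put `d = φ_B(x₀) φ_A - φ_A(x₀) φ_B`, which vanishes at `x₀` and at infinity.
At an interior maximum `x` of `d` we have `d'(x) = 0`, and the two equations combine to
`½ σ² d''(x) + (B - A) φ_B(x₀) φ_A'(x) = r d(x)`; the left side is `≤ 0`, so `d(x) ≤ 0`.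
Hence `d ≤ 0` on `[x₀, ∞)`, so `d'(x₀) ≤ 0`, i.e. `φ_B φ_A' ≤ φ_A φ_B'` at `x₀`. At `x₀ = 0`
this is `φ_A'(0) ≤ φ_B'(0)`; dividing by `φ_A' φ_B' > 0` gives the second claim.
-/

open Set Filter Topology

theorem IsLocalMax.deriv_deriv_nonpos {f : ℝ → ℝ} {a : ℝ} (h : IsLocalMax f a)
    (hc : ContinuousAt f a) : deriv (deriv f) a ≤ 0 := by
  by_contra! hpos
  have hconst : f =ᶠ[𝓝 a] fun _ => f a :=
    (h.and (isLocalMin_of_deriv_deriv_pos hpos h.deriv_eq_zero hc)).mono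
      fun _ hx => le_antisymm hx.1 hx.2
  rw [hconst.deriv.deriv_eq, deriv_const', deriv_const] at hpos
  exact hpos.false

theorem IsMaxOn.deriv_nonpos_of_Ici {f : ℝ → ℝ} {a : ℝ} (h : IsMaxOn f (Ici a) a)
    (hf : DifferentiableAt ℝ f a) : deriv f a ≤ 0 := by
  have hone : (1 : ℝ) ∈ posTangentConeAt (Ici a) a :=
    one_mem_posTangentConeAt_iff_frequently.2
      (eventually_nhdsWithin_of_forall fun x (hx : x ∈ Ioi a) => mem_Ici.2 hx.le).frequently
  simpa using h.localize.hasFDerivWithinAt_nonpos hf.hasDerivAt.hasFDerivAt.hasFDerivWithinAt hone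

theorem nonpos_on_Ici_of_isLocalMax_nonpos {d : ℝ → ℝ} {a : ℝ} (hc : ContinuousOn d (Ici a))
    (ha : d a ≤ 0) (hlim : Tendsto d atTop (𝓝 0))
    (hmax : ∀ x > a, IsLocalMax d x → d x ≤ 0) : ∀ x ≥ a, d x ≤ 0 := by
  by_contra! ⟨y, hy, hdy⟩
  have hfar : ∀ᶠ x in cocompact ℝ ⊓ 𝓟 (Ici a), d x ≤ d y := by
    rw [cocompact_eq_atBot_atTop, inf_sup_right, (disjoint_atBot_principal_Ici a).eq_bot,
      bot_sup_eq]
    exact (hlim.eventually (ge_mem_nhds hdy)).filter_mono inf_le_left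
  obtain ⟨c, hc_mem, hc_max⟩ := hc.exists_isMaxOn' isClosed_Ici hy hfar
  have hdc : 0 < d c := hdy.trans_le (hc_max hy)
  have hac : a < c := lt_of_le_of_ne hc_mem fun hac => by subst hac; linarith
  exact (hmax c hac (hc_max.isLocalMax (Ici_mem_nhds hac))).not_gt hdc

theorem deriv_const_mul_sub_const_mul {f g : ℝ → ℝ} (a b : ℝ) (hf : Differentiable ℝ f)
    (hg : Differentiable ℝ g) :
    deriv (fun z => a * f z - b * g z) = fun z => a * deriv f z - b * deriv g z := by
  funext z
  rw [deriv_fun_sub ((hf z).const_mul a) ((hg z).const_mul b), deriv_const_mul a (hf z),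
    deriv_const_mul b (hg z)]

section DriftComparison

variable {r A B x₀ : ℝ} {μ σ f g : ℝ → ℝ}

theorem mul_sub_mul_nonpos_of_drift_le (hr : 0 < r) (hAB : A ≤ B)
    (hf : Differentiable ℝ f) (hf' : Differentiable ℝ (deriv f))
    (hg : Differentiable ℝ g) (hg' : Differentiable ℝ (deriv g))
    (hf_ode : ∀ x > x₀,
      (1/2) * σ x ^ 2 * deriv (deriv f) x + (μ x - A) * deriv f x - r * f x = 0)
    (hg_ode : ∀ x > x₀,
      (1/2) * σ x ^ 2 * deriv (deriv g) x + (μ x - B) * deriv g x - r * g x = 0)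
    (hf_anti : ∀ x > x₀, deriv f x ≤ 0) (hg₀ : 0 ≤ g x₀)
    (hf_lim : Tendsto f atTop (𝓝 0)) (hg_lim : Tendsto g atTop (𝓝 0)) :
    ∀ x ≥ x₀, g x₀ * f x - f x₀ * g x ≤ 0 := by
  set d : ℝ → ℝ := fun x => g x₀ * f x - f x₀ * g x
  have hd' := deriv_const_mul_sub_const_mul (g x₀) (f x₀) hf hg
  have hd'' := deriv_const_mul_sub_const_mul (g x₀) (f x₀) hf' hg'
  have hd_cont : Continuous d :=
    (continuous_const.mul hf.continuous).sub (continuous_const.mul hg.continuous)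
  refine nonpos_on_Ici_of_isLocalMax_nonpos hd_cont.continuousOn (by simp [mul_comm])
    (by simpa using (hf_lim.const_mul (g x₀)).sub (hg_lim.const_mul (f x₀)))
    fun x hx hmax => ?_
  have h1 : g x₀ * deriv f x - f x₀ * deriv g x = 0 := by
    simpa [d, hd'] using hmax.deriv_eq_zero
  have h2 : g x₀ * deriv (deriv f) x - f x₀ * deriv (deriv g) x ≤ 0 := by
    simpa [d, hd', hd''] using hmax.deriv_deriv_nonpos hd_cont.continuousAt
  have hcombined : (1/2) * σ x ^ 2 * (g x₀ * deriv (deriv f) x - f x₀ * deriv (deriv g) x)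
      + (B - A) * (g x₀ * deriv f x) = r * d x := by
    linear_combination g x₀ * hf_ode x hx - f x₀ * hg_ode x hx - (μ x - B) * h1
  have hlhs : (1/2) * σ x ^ 2 * (g x₀ * deriv (deriv f) x - f x₀ * deriv (deriv g) x)
      + (B - A) * (g x₀ * deriv f x) ≤ 0 :=
    add_nonpos (mul_nonpos_of_nonneg_of_nonpos (by positivity) h2)
      (mul_nonpos_of_nonneg_of_nonpos (sub_nonneg.2 hAB)
        (mul_nonpos_of_nonneg_of_nonpos hg₀ (hf_anti x hx)))
  exact nonpos_of_mul_nonpos_right (hcombined ▸ hlhs) hr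

theorem mul_deriv_le_mul_deriv_of_drift_le (hr : 0 < r) (hAB : A ≤ B)
    (hf : Differentiable ℝ f) (hf' : Differentiable ℝ (deriv f))
    (hg : Differentiable ℝ g) (hg' : Differentiable ℝ (deriv g))
    (hf_ode : ∀ x > x₀,
      (1/2) * σ x ^ 2 * deriv (deriv f) x + (μ x - A) * deriv f x - r * f x = 0)
    (hg_ode : ∀ x > x₀,
      (1/2) * σ x ^ 2 * deriv (deriv g) x + (μ x - B) * deriv g x - r * g x = 0)
    (hf_anti : ∀ x > x₀, deriv f x ≤ 0) (hg₀ : 0 ≤ g x₀)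
    (hf_lim : Tendsto f atTop (𝓝 0)) (hg_lim : Tendsto g atTop (𝓝 0)) :
    g x₀ * deriv f x₀ ≤ f x₀ * deriv g x₀ := by
  have hmax : IsMaxOn (fun x => g x₀ * f x - f x₀ * g x) (Ici x₀) x₀ := fun x hx => by
    simpa [mul_comm] using mul_sub_mul_nonpos_of_drift_le hr hAB hf hf' hg hg' hf_ode hg_ode
      hf_anti hg₀ hf_lim hg_lim x hx
  have hd' := hmax.deriv_nonpos_of_Ici (by fun_prop)
  rw [deriv_const_mul_sub_const_mul _ _ hf hg] at hd'
  linarith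

end DriftComparison

theorem stmt_16_general
    (r : ℝ) (hr : 0 < r)
    (μ σ : ℝ → ℝ)
    (φ : ℝ → ℝ → ℝ)
    (hφC : ∀ A ≥ (0:ℝ), ContDiff ℝ 2 (φ A))
    (hφ0 : ∀ A ≥ (0:ℝ), φ A 0 = 1)
    (hφpos : ∀ A ≥ (0:ℝ), ∀ x ≥ (0:ℝ), 0 < φ A x)
    (hφlim : ∀ A ≥ (0:ℝ), Tendsto (φ A) atTop (nhds 0))
    (hφODE : ∀ A ≥ (0:ℝ), ∀ x ≥ (0:ℝ),
      (1/2) * σ x ^ 2 * deriv (deriv (φ A)) x + (μ x - A) * deriv (φ A) x - r * φ A x = 0)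
    (hφdneg : ∀ A ≥ (0:ℝ), ∀ x ≥ (0:ℝ), deriv (φ A) x < 0)
    (A B : ℝ) (hA : 0 ≤ A) (hAB : A ≤ B) :
    deriv (φ A) 0 ≤ deriv (φ B) 0 ∧
    ∀ x ≥ (0:ℝ), -(φ A x) / deriv (φ A) x ≤ -(φ B x) / deriv (φ B) x := by
  have hB : 0 ≤ B := hA.trans hAB
  have hcross : ∀ x ≥ (0:ℝ), φ B x * deriv (φ A) x ≤ φ A x * deriv (φ B) x := fun x hx =>
    mul_deriv_le_mul_deriv_of_drift_le hr hAB
      ((hφC A hA).differentiable two_ne_zero) (hφC A hA).differentiable_deriv_two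
      ((hφC B hB).differentiable two_ne_zero) (hφC B hB).differentiable_deriv_two
      (fun y hy => hφODE A hA y (hx.trans hy.le)) (fun y hy => hφODE B hB y (hx.trans hy.le))
      (fun y hy => (hφdneg A hA y (hx.trans hy.le)).le) (hφpos B hB x hx).le
      (hφlim A hA) (hφlim B hB)
  refine ⟨by simpa [hφ0 A hA, hφ0 B hB] using hcross 0 le_rfl, fun x hx => ?_⟩
  rw [← div_neg_eq_neg_div', ← div_neg_eq_neg_div',
    div_le_div_iff₀ (neg_pos.2 (hφdneg A hA x hx)) (neg_pos.2 (hφdneg B hB x hx))]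
  linarith [hcross x hx]

/-- monotonicity in the drift shift of the fundamental decreasing
solutions: for 0 ≤ A ≤ B one has φ_A'(0) ≤ φ_B'(0) and
−φ_A(x)/φ_A'(x) ≤ −φ_B(x)/φ_B'(x) for every x ≥ 0. -/
theorem stmt_16
    (r : ℝ) (hr : 0 < r)
    (μ σ : ℝ → ℝ) (hμ : ContDiff ℝ 1 μ) (hσ : ContDiff ℝ 1 σ)
    (hσpos : ∀ x ≥ (0:ℝ), 0 < σ x ^ 2)
    (hμderiv : ∀ x ≥ (0:ℝ), deriv μ x < r)
    (φ : ℝ → ℝ → ℝ)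
    (hφC : ∀ A ≥ (0:ℝ), ContDiff ℝ 2 (φ A))
    (hφ0 : ∀ A ≥ (0:ℝ), φ A 0 = 1)
    (hφpos : ∀ A ≥ (0:ℝ), ∀ x ≥ (0:ℝ), 0 < φ A x)
    (hφanti : ∀ A ≥ (0:ℝ), AntitoneOn (φ A) (Ici (0:ℝ)))
    (hφlim : ∀ A ≥ (0:ℝ), Tendsto (φ A) atTop (nhds 0))
    (hφODE : ∀ A ≥ (0:ℝ), ∀ x ≥ (0:ℝ),
      (1/2) * σ x ^ 2 * deriv (deriv (φ A)) x + (μ x - A) * deriv (φ A) x - r * φ A x = 0)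
    (hφdneg : ∀ A ≥ (0:ℝ), ∀ x ≥ (0:ℝ), deriv (φ A) x < 0)
    (hφddpos : ∀ A ≥ (0:ℝ), ∀ x ≥ (0:ℝ), 0 < deriv (deriv (φ A)) x)
    (A B : ℝ) (hA : 0 ≤ A) (hAB : A ≤ B) :
    deriv (φ A) 0 ≤ deriv (φ B) 0 ∧
    ∀ x ≥ (0:ℝ), -(φ A x) / deriv (φ A) x ≤ -(φ B x) / deriv (φ B) x :=
  stmt_16_general r hr μ σ φ hφC hφ0 hφpos hφlim hφODE hφdneg A B hA hAB
end

section
/- Let μ > 0, σ > 0, r > 0, K > 0 and let n ≥ 1 be an integer. Define α := −μ/σ² + √(μ²/σ⁴ + 2r/σ²), β := −μ/σ² − √(μ²/σ⁴ + 2r/σ²), and γ := −(μ − nK)/σ² − √((μ − nK)²/σ⁴ + 2r/σ²). Assume (K/r)·((μ − nK)/σ² + √((μ − nK)²/σ⁴ + 2r/σ²)) > 1, and additionally that K/r + 1/γ < 1/α. Then the quantity b̂ := (1/(α − β))·ln( (1 − (K/r + 1/γ)·β) / (1 − (K/r + 1/γ)·α) ) is well defined (the argument of the logarithm is strictly greater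 than 1), b̂ > 0, and b̂ satisfies the threshold equation (e^{α·b̂} − e^{β·b̂}) / (α·e^{α·b̂} − β·e^{β·b̂}) − 1/γ = K/r. -/
open Real

/-- explicit equilibrium threshold in the model with constant
coefficients: under the stated conditions the closed-form b̂ is well defined
(the argument of the logarithm exceeds 1), positive, and solves the threshold
equation ψ(b̂)/ψ'(b̂) − φ_{nK}(b̂)/φ_{nK}'(b̂) = K/r. -/
theorem stmt_19
    (μ σ r K : ℝ) (n : ℕ)
    (hμ : 0 < μ) (hσ : 0 < σ) (hr : 0 < r) (hK : 0 < K) (hn : 1 ≤ n)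
    (α β γ : ℝ)
    (hα : α = -μ / σ ^ 2 + Real.sqrt (μ ^ 2 / σ ^ 4 + 2 * r / σ ^ 2))
    (hβ : β = -μ / σ ^ 2 - Real.sqrt (μ ^ 2 / σ ^ 4 + 2 * r / σ ^ 2))
    (hγ : γ = -(μ - (n : ℝ) * K) / σ ^ 2
      - Real.sqrt ((μ - (n : ℝ) * K) ^ 2 / σ ^ 4 + 2 * r / σ ^ 2))
    (hcond : 1 < (K / r) * ((μ - (n : ℝ) * K) / σ ^ 2
      + Real.sqrt ((μ - (n : ℝ) * K) ^ 2 / σ ^ 4 + 2 * r / σ ^ 2)))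
    (hcond2 : K / r + 1 / γ < 1 / α) :
    ∃ bh : ℝ,
      bh = (1 / (α - β)) *
        Real.log ((1 - (K / r + 1 / γ) * β) / (1 - (K / r + 1 / γ) * α)) ∧
      1 < (1 - (K / r + 1 / γ) * β) / (1 - (K / r + 1 / γ) * α) ∧
      0 < bh ∧
      (Real.exp (α * bh) - Real.exp (β * bh)) /
        (α * Real.exp (α * bh) - β * Real.exp (β * bh)) - 1 / γ = K / r := by
  have hσ2 : (0:ℝ) < σ ^ 2 := by positivity
  have hμσ : 0 < μ / σ ^ 2 := by positivity
  -- s > μ/σ²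
  have hsq : (μ / σ ^ 2) ^ 2 < μ ^ 2 / σ ^ 4 + 2 * r / σ ^ 2 := by
    have h1 : (μ / σ ^ 2) ^ 2 = μ ^ 2 / σ ^ 4 := by
      rw [div_pow]; ring_nf
    have h2 : 0 < 2 * r / σ ^ 2 := by positivity
    linarith [h1.le, h1.ge]
  have hslt : μ / σ ^ 2 < Real.sqrt (μ ^ 2 / σ ^ 4 + 2 * r / σ ^ 2) :=
    (Real.lt_sqrt hμσ.le).mpr hsq
  have hα0 : 0 < α := by rw [hα, neg_div]; linarith
  have hβ0 : β < 0 := by rw [hβ, neg_div]; linarith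
  have hαβ : 0 < α - β := by rw [hα, hβ, neg_div]; linarith
  -- γ
  set X : ℝ := (μ - (n : ℝ) * K) / σ ^ 2
      + Real.sqrt ((μ - (n : ℝ) * K) ^ 2 / σ ^ 4 + 2 * r / σ ^ 2) with hX
  clear_value X
  have hγX : γ = -X := by rw [hγ, hX]; ring
  have hKr : 0 < K / r := by positivity
  have hXpos : 0 < X := by
    by_contra h
    push_neg at h
    nlinarith [mul_le_mul_of_nonneg_left h hKr.le]
  have hγ0 : γ < 0 := by rw [hγX]; linarith
  have hγne : γ ≠ 0 := ne_of_lt hγ0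
  set c : ℝ := K / r + 1 / γ with hc
  clear_value c
  have h1X : (1 / X) * X = 1 := by field_simp
  have hc0 : 0 < c := by
    have hcX : c = K / r - 1 / X := by rw [hc, hγX, div_neg]; ring
    rw [hcX]
    nlinarith
  have hcα : c * α < 1 := by
    have h := (lt_div_iff₀ hα0).mp hcond2
    linarith
  have hden : 0 < 1 - c * α := by linarith
  have hnum : 1 < 1 - c * β := by nlinarith [mul_neg_of_pos_of_neg hc0 hβ0]
  set R : ℝ := (1 - c * β) / (1 - c * α) with hR
  clear_value R
  have hR1 : 1 < R := by
    rw [hR, lt_div_iff₀ hden]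
    have h1 : 0 < c * α := mul_pos hc0 hα0
    have h2 : c * β < 0 := mul_neg_of_pos_of_neg hc0 hβ0
    linarith
  have hRpos : 0 < R := lt_trans one_pos hR1
  set b : ℝ := (1 / (α - β)) * Real.log R with hb
  clear_value b
  have hlogR : 0 < Real.log R := Real.log_pos hR1
  have hbpos : 0 < b := by
    rw [hb]
    exact mul_pos (by positivity) hlogR
  refine ⟨b, rfl, hR1, hbpos, ?_⟩
  have hexp : Real.exp (α * b) = Real.exp (β * b) * R := by
    have hab : α * b = β * b + Real.log R := by
      rw [hb]; field_simp; ring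
    rw [hab, Real.exp_add, Real.exp_log hRpos]
  have hE2 : 0 < Real.exp (β * b) := Real.exp_pos _
  have hE1 : 0 < Real.exp (α * b) := Real.exp_pos _
  have hD : 0 < α * Real.exp (α * b) - β * Real.exp (β * b) := by
    have h1 : 0 < α * Real.exp (α * b) := mul_pos hα0 hE1
    have h2 : β * Real.exp (β * b) < 0 := mul_neg_of_neg_of_pos hβ0 hE2
    linarith
  have hkey : Real.exp (α * b) - Real.exp (β * b)
      = c * (α * Real.exp (α * b) - β * Real.exp (β * b)) := by
    rw [hexp, hR]
    field_simp
    ring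
  rw [hkey, mul_div_assoc, div_self (ne_of_gt hD), mul_one, hc]
  ring
end
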